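/- Let f = Σ_{n=0}^∞ C_n·X^n/n! ∈ ℝ⟦X⟧ be the exponential generating function of the eigensequence of the Stirling transform. Then the second derivative of f satisfies, in ℝ⟦X⟧: f'' = exp(X)·(f ∘ σ^2 + 1), where σ^2 = σ^1 ∘ σ^1 with σ^1 = exp(X) − 1 (composition is well-defined since σ^1 has zero constant term). -/

import Mathlib

/-- Stirling numbers of the second kind. -/
def S2 : ℕ → ℕ → ℕ
  | 0, 0 => 1
  | 0, _ + 1 => 0
  | _ + 1, 0 => 0
  | n + 1, m + 1 => (m + 1) * S2 n (m + 1) + S2 n m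

/-- Entries `S^p_{n,m}` of the `p`-th power of the Stirling matrix (for `p ≥ 1`;
the value at `p = 0` is junk). -/
def Sp : ℕ → ℕ → ℕ → ℕ
  | 0, _, _ => 0
  | 1, n, m => S2 n m
  | p + 2, n, m => ∑ k ∈ Finset.range (n + 1), S2 n k * Sp (p + 1) k m

/-- Composition `f ∘ g` of formal power series (the intended meaning when `g` has zero
constant term, in which case `coeff n (g ^ k) = 0` for `k > n`). -/
noncomputable def PSComp (f g : PowerSeries ℝ) : PowerSeries ℝ :=
  PowerSeries.mk fun n =>
    ∑ k ∈ Finset.range (n + 1), (PowerSeries.coeff k f) * (PowerSeries.coeff n (g ^ k))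

/-- `σ^p`, the `p`-fold compositional iterate of `exp X - 1` (with `σ^0 = X`). -/
noncomputable def sigmaP : ℕ → PowerSeries ℝ
  | 0 => PowerSeries.X
  | p + 1 => PSComp (sigmaP p) (PowerSeries.exp ℝ - 1)

open PowerSeries Finset
open scoped Nat

/-!
Write `σ = exp X - 1`. Differentiating `σ ^ (k + 1)` and using `σ' = σ + 1` gives the
recurrence of `S(n, k)` for `n! [Xⁿ] σᵏ`, so `n! [Xⁿ] σᵏ = k! S(n, k)`. With this the
coefficient of `Xⁿ/n!` in `f ∘ σ` is `∑ₖ C_k S(n, k)`, and the recurrence for `C` is exactly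
`f' = f ∘ σ + 1`. Differentiating again by the chain rule gives
`f'' = (f' ∘ σ) σ' = (f ∘ σ ∘ σ + 1) exp X`.
-/

theorem PowerSeries.coeff_pow_eq_zero_of_lt {R : Type*} [CommSemiring R] {g : R⟦X⟧}
    (hg : constantCoeff g = 0) {n k : ℕ} (h : n < k) : coeff n (g ^ k) = 0 :=
  X_pow_dvd_iff.mp (pow_dvd_pow_of_dvd (X_dvd_iff.mpr hg) k) n h

theorem PowerSeries.coeff_subst_eq_sum_range {R : Type*} [CommRing R] (f : R⟦X⟧) {g : R⟦X⟧}
    (hg : constantCoeff g = 0) (n : ℕ) :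
    coeff n (f.subst g) = ∑ k ∈ range (n + 1), coeff k f * coeff n (g ^ k) := by
  rw [coeff_subst' (HasSubst.of_constantCoeff_zero' hg)]
  refine finsum_eq_sum_of_support_subset _ fun k hk => ?_
  by_contra hkn
  simp only [coe_range, Set.mem_Iio, not_lt] at hkn
  exact hk (show coeff k f • coeff n (g ^ k) = 0 by
    rw [coeff_pow_eq_zero_of_lt hg (by omega), smul_zero])

theorem PSComp_eq_subst (f : PowerSeries ℝ) {g : PowerSeries ℝ} (hg : constantCoeff g = 0) :
    PSComp f g = f.subst g := by
  ext n
  simp [PSComp, coeff_subst_eq_sum_range f hg]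

section ExpSubOne

variable (A : Type*) [CommRing A] [Algebra ℚ A]

theorem constantCoeff_exp_sub_one : constantCoeff (exp A - 1) = 0 := by
  simp

theorem derivative_exp_sub_one_pow_succ (k : ℕ) :
    d⁄dX A ((exp A - 1) ^ (k + 1)) = (k + 1) • ((exp A - 1) ^ (k + 1) + (exp A - 1) ^ k) := by
  rw [Derivation.leibniz_pow, map_sub, derivative_exp, Derivation.map_one_eq_zero, sub_zero,
    Nat.add_sub_cancel, smul_eq_mul]
  ring

theorem factorial_mul_coeff_exp_sub_one_pow (n k : ℕ) :
    (n ! : A) * coeff n ((exp A - 1) ^ k) = k ! * S2 n k := by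
  induction n generalizing k with
  | zero => cases k <;> simp [S2, coeff_zero_eq_constantCoeff_apply]
  | succ n ih =>
    cases k with
    | zero => simp [S2]
    | succ k =>
      have hcoeff := congrArg (coeff n) (derivative_exp_sub_one_pow_succ A k)
      rw [coeff_derivative, map_nsmul, nsmul_eq_mul, map_add] at hcoeff
      calc ((n + 1)! : A) * coeff (n + 1) ((exp A - 1) ^ (k + 1))
          = n ! * (coeff (n + 1) ((exp A - 1) ^ (k + 1)) * (n + 1)) := by
            push_cast [Nat.factorial_succ]; ring
        _ = (k + 1) * (n ! * coeff n ((exp A - 1) ^ (k + 1)) +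
              n ! * coeff n ((exp A - 1) ^ k)) := by
            rw [hcoeff]; push_cast; ring
        _ = (k + 1) * ((k + 1)! * S2 n (k + 1) + k ! * S2 n k) := by rw [ih, ih]
        _ = (k + 1)! * S2 (n + 1) (k + 1) := by
            simp only [S2]; push_cast [Nat.factorial_succ]; ring

theorem derivative_derivative_of_derivative_eq_subst_exp_sub_one_add_one {F : A⟦X⟧}
    (hF : d⁄dX A F = F.subst (exp A - 1) + 1) :
    d⁄dX A (d⁄dX A F) = exp A * (F.subst ((exp A - 1).subst (exp A - 1)) + 1) := by
  have hσ : HasSubst (exp A - 1) := .of_constantCoeff_zero' (constantCoeff_exp_sub_one A)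
  calc d⁄dX A (d⁄dX A F)
      = d⁄dX A (F.subst (exp A - 1)) := by rw [hF, map_add, Derivation.map_one_eq_zero, add_zero]
    _ = subst (exp A - 1 : A⟦X⟧) (F.subst (exp A - 1) + 1 : A⟦X⟧) * exp A := by
      rw [derivative_subst hσ, hF, map_sub, derivative_exp, Derivation.map_one_eq_zero, sub_zero]
    _ = exp A * (F.subst ((exp A - 1).subst (exp A - 1)) + 1) := by
      rw [subst_add hσ, subst_comp_subst_apply hσ hσ, ← coe_substAlgHom hσ, map_one]
      ring

end ExpSubOne

theorem coeff_exp_sub_one_pow {K : Type*} [Field K] [CharZero K] (n k : ℕ) :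
    coeff n ((exp K - 1) ^ k) = (k ! * S2 n k / n ! : K) := by
  rw [eq_div_iff (by exact_mod_cast n.factorial_ne_zero), mul_comm,
    factorial_mul_coeff_exp_sub_one_pow]

theorem derivative_egf_eq_subst_exp_sub_one_add_one {K : Type*} [Field K] [CharZero K]
    (c : ℕ → K) (h0 : c 0 = 0) (h1 : c 1 = 1)
    (hrec : ∀ n, 1 ≤ n → c (n + 1) = ∑ k ∈ range (n + 1), c k * S2 n k) :
    d⁄dX K (mk fun n => c n / n !) = (mk fun n => c n / n !).subst (exp K - 1) + 1 := by
  ext n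
  have hn : (n ! : K) ≠ 0 := by exact_mod_cast n.factorial_ne_zero
  have hsum : coeff n ((mk fun n => c n / n !).subst (exp K - 1)) =
      (∑ k ∈ range (n + 1), c k * S2 n k) / n ! := by
    rw [coeff_subst_eq_sum_range _ (constantCoeff_exp_sub_one K), sum_div]
    refine sum_congr rfl fun k _ => ?_
    rw [coeff_mk, coeff_exp_sub_one_pow]
    field_simp [(by exact_mod_cast k.factorial_ne_zero : (k ! : K) ≠ 0)]
  rw [coeff_derivative, coeff_mk, map_add, hsum, coeff_one]
  rcases Nat.eq_zero_or_pos n with rfl | hpos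
  · simp [h0, h1, S2]
  · rw [if_neg hpos.ne', add_zero, ← hrec n hpos]
    push_cast [Nat.factorial_succ]
    field_simp

theorem sigmaP_two : sigmaP 2 = (exp ℝ - 1).subst (exp ℝ - 1) := by
  have hσ := constantCoeff_exp_sub_one ℝ
  rw [sigmaP, sigmaP, sigmaP, PSComp_eq_subst X hσ, subst_X (.of_constantCoeff_zero' hσ),
    PSComp_eq_subst _ hσ]

/-- If `c` is the eigensequence of the Stirling transform (`c 0 = 0`, `c 1 = 1`,
`c (n+1) = ∑_{k=0}^n c k · S(n,k)` for `n ≥ 1`), then its EGF `f` satisfies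
`f'' = exp(X) · (f ∘ σ² + 1)`. -/
theorem eigensequence_egf_second_derivative (c : ℕ → ℝ) (h0 : c 0 = 0) (h1 : c 1 = 1)
    (hrec : ∀ n, 1 ≤ n → c (n + 1) = ∑ k ∈ Finset.range (n + 1), c k * S2 n k) :
    PowerSeries.derivative ℝ
        (PowerSeries.derivative ℝ (PowerSeries.mk fun n => c n / n.factorial)) =
      PowerSeries.exp ℝ *
        (PSComp (PowerSeries.mk fun n => c n / n.factorial) (sigmaP 2) + 1) := by
  have hσ := constantCoeff_exp_sub_one ℝ
  rw [sigmaP_two, PSComp_eq_subst _ (constantCoeff_subst_eq_zero hσ _ hσ)]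
  exact derivative_derivative_of_derivative_eq_subst_exp_sub_one_add_one ℝ
    (derivative_egf_eq_subst_exp_sub_one_add_one c h0 h1 hrec)
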